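/- arXiv:2404.10687 — 5 statements merged into one kernel-verified Lean document; each statement's English description precedes it below -/
import Mathlib

section
/- Let H be a real m×n matrix and L a real n×l matrix with linearly independent columns, and set P = L Lᵀ. Let B be the Moore–Penrose pseudoinverse of H L (i.e., B is the l×m matrix satisfying (HL)B(HL) = HL, B(HL)B = B, ((HL)B)ᵀ = (HL)B, and (B(HL))ᵀ = B(HL)). Then, for every δ > 0 the matrix H P Hᵀ + δ·I_m is invertible, and the matrix-valued function δ ↦ P Hᵀ (H P Hᵀ + δ·I_m)⁻¹ tends to L B as δ tends to 0 from the right. -/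
/-!
With `A = H * L` we have `P * Hᵀ * (H * P * Hᵀ + δ • 1)⁻¹ = L * (Aᵀ * (A * Aᵀ + δ • 1)⁻¹)`, so
it suffices to show that the Tikhonov-regularised inverse `Aᵀ * (A * Aᵀ + δ • 1)⁻¹` tends to the
Moore–Penrose inverse `B` of `A`. The Penrose equations give `B * (A * Aᵀ) = Aᵀ` and
`B * Bᵀ * Aᵀ = B`, from which one gets the exact formula
`Aᵀ * (A * Aᵀ + δ • 1)⁻¹ = B - δ • ((1 + δ • (B * Bᵀ))⁻¹ * (B * Bᵀ * B))`,
whose right-hand side is continuous in `δ` at `0`.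
-/

open Filter Topology

namespace Matrix

variable {m l R : Type*} [Fintype m] [Fintype l]

/-- The four Penrose equations, with the transpose in place of the conjugate transpose. -/
structure IsMoorePenroseInverse [CommRing R] (A : Matrix m l R) (B : Matrix l m R) : Prop where
  mul_mul_eq_self : A * B * A = A
  mul_mul_eq_pinv : B * A * B = B
  isSymm_mul_pinv : (A * B).IsSymm
  isSymm_pinv_mul : (B * A).IsSymm

namespace IsMoorePenroseInverse

section CommRing

variable [CommRing R] {A : Matrix m l R} {B : Matrix l m R}

theorem mul_mul_mul_transpose (h : IsMoorePenroseInverse A B) : B * (A * Aᵀ) = Aᵀ :=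
  calc B * (A * Aᵀ) = (B * A)ᵀ * Aᵀ := by rw [← Matrix.mul_assoc, h.isSymm_pinv_mul.eq]
    _ = (A * B * A)ᵀ := by rw [← transpose_mul, Matrix.mul_assoc]
    _ = Aᵀ := by rw [h.mul_mul_eq_self]

theorem mul_transpose_mul_transpose (h : IsMoorePenroseInverse A B) : B * Bᵀ * Aᵀ = B :=
  calc B * Bᵀ * Aᵀ = B * (A * B) := by
        rw [Matrix.mul_assoc, ← transpose_mul, h.isSymm_mul_pinv.eq]
    _ = B := by rw [← Matrix.mul_assoc, h.mul_mul_eq_pinv]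

variable [DecidableEq m]

theorem transpose_mul_inv_add_smul_one (h : IsMoorePenroseInverse A B) {δ : R}
    (hM : IsUnit (A * Aᵀ + δ • 1)) :
    Aᵀ * (A * Aᵀ + δ • 1)⁻¹ = B - δ • (B * (A * Aᵀ + δ • 1)⁻¹) := by
  have hMinv : (A * Aᵀ + δ • 1) * (A * Aᵀ + δ • 1)⁻¹ = 1 :=
    mul_nonsing_inv _ ((isUnit_iff_isUnit_det _).mp hM)
  calc Aᵀ * (A * Aᵀ + δ • 1)⁻¹ = B * ((A * Aᵀ + δ • 1 - δ • 1) * (A * Aᵀ + δ • 1)⁻¹) := by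
        rw [add_sub_cancel_right, ← Matrix.mul_assoc, h.mul_mul_mul_transpose]
    _ = B - δ • (B * (A * Aᵀ + δ • 1)⁻¹) := by
        rw [Matrix.sub_mul, hMinv, Matrix.mul_sub, Matrix.mul_one, smul_mul_assoc,
          Matrix.one_mul, Matrix.mul_smul]

theorem transpose_mul_inv_add_smul_one_eq [DecidableEq l] (h : IsMoorePenroseInverse A B) {δ : R}
    (hM : IsUnit (A * Aᵀ + δ • 1)) (hN : IsUnit (1 + δ • (B * Bᵀ))) :
    Aᵀ * (A * Aᵀ + δ • 1)⁻¹ = B - δ • ((1 + δ • (B * Bᵀ))⁻¹ * (B * Bᵀ * B)) := by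
  have hX : B * (A * Aᵀ + δ • 1)⁻¹ =
      B * Bᵀ * B - δ • (B * Bᵀ * (B * (A * Aᵀ + δ • 1)⁻¹)) :=
    calc B * (A * Aᵀ + δ • 1)⁻¹ = B * Bᵀ * (Aᵀ * (A * Aᵀ + δ • 1)⁻¹) := by
          rw [← Matrix.mul_assoc, h.mul_transpose_mul_transpose]
      _ = B * Bᵀ * B - δ • (B * Bᵀ * (B * (A * Aᵀ + δ • 1)⁻¹)) := by
          rw [h.transpose_mul_inv_add_smul_one hM, Matrix.mul_sub, Matrix.mul_smul]
  have hNX : (1 + δ • (B * Bᵀ)) * (B * (A * Aᵀ + δ • 1)⁻¹) = B * Bᵀ * B := by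
    rw [Matrix.add_mul, Matrix.one_mul, Matrix.smul_mul]
    nth_rewrite 1 [hX]
    abel
  rw [h.transpose_mul_inv_add_smul_one hM, ← hNX, ← Matrix.mul_assoc,
    nonsing_inv_mul _ ((isUnit_iff_isUnit_det _).mp hN), Matrix.one_mul]

end CommRing

end IsMoorePenroseInverse

section Real

theorem posSemidef_mul_transpose (A : Matrix m l ℝ) : (A * Aᵀ).PosSemidef := by
  simpa only [conjTranspose_eq_transpose_of_trivial] using posSemidef_self_mul_conjTranspose A

variable [DecidableEq m]

theorem isUnit_mul_transpose_add_smul_one (A : Matrix m l ℝ) {δ : ℝ} (hδ : 0 < δ) :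
    IsUnit (A * Aᵀ + δ • 1) :=
  (PosDef.posSemidef_add (posSemidef_mul_transpose A) (PosDef.one.smul hδ)).isUnit

theorem isUnit_one_add_smul_mul_transpose (B : Matrix m l ℝ) {δ : ℝ} (hδ : 0 ≤ δ) :
    IsUnit (1 + δ • (B * Bᵀ)) :=
  (PosDef.one.add_posSemidef ((posSemidef_mul_transpose B).smul hδ)).isUnit

theorem continuousAt_inv_one_add_smul (C : Matrix m m ℝ) :
    ContinuousAt (fun δ : ℝ => (1 + δ • C)⁻¹) 0 := by
  have hinv : ContinuousAt Inv.inv (1 + (0 : ℝ) • C) := by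
    refine continuousAt_matrix_inv _ ?_
    rw [zero_smul, add_zero, det_one, Ring.inverse_eq_inv']
    exact continuousAt_inv₀ one_ne_zero
  exact hinv.comp (f := fun δ : ℝ => 1 + δ • C) (by fun_prop)

theorem IsMoorePenroseInverse.tendsto_transpose_mul_inv_add_smul_one [DecidableEq l]
    {A : Matrix m l ℝ} {B : Matrix l m ℝ} (h : IsMoorePenroseInverse A B) :
    Tendsto (fun δ : ℝ => Aᵀ * (A * Aᵀ + δ • 1)⁻¹) (𝓝[>] 0) (𝓝 B) := by
  have hlim :
      Tendsto (fun δ : ℝ => B - δ • ((1 + δ • (B * Bᵀ))⁻¹ * (B * Bᵀ * B))) (𝓝 0) (𝓝 B) := by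
    have hc : ContinuousAt (fun δ : ℝ => B - δ • ((1 + δ • (B * Bᵀ))⁻¹ * (B * Bᵀ * B))) 0 :=
      continuousAt_const.sub
        (continuousAt_id.smul ((continuous_id.matrix_mul continuous_const).continuousAt.comp
          (continuousAt_inv_one_add_smul _)))
    simpa using hc.tendsto
  refine (hlim.mono_left nhdsWithin_le_nhds).congr' ?_
  filter_upwards [self_mem_nhdsWithin] with δ hδ
  exact (h.transpose_mul_inv_add_smul_one_eq (isUnit_mul_transpose_add_smul_one A hδ)
    (isUnit_one_add_smul_mul_transpose B hδ.le)).symm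

end Real

end Matrix

open Matrix

theorem kalman_gain_noise_free_limit_general
    {m n l : ℕ}
    (H : Matrix (Fin m) (Fin n) ℝ) (L : Matrix (Fin n) (Fin l) ℝ)
    (P : Matrix (Fin n) (Fin n) ℝ) (hP : P = L * Lᵀ)
    (B : Matrix (Fin l) (Fin m) ℝ)
    (hB1 : (H * L) * B * (H * L) = H * L)
    (hB2 : B * (H * L) * B = B)
    (hB3 : ((H * L) * B)ᵀ = (H * L) * B)
    (hB4 : (B * (H * L))ᵀ = B * (H * L)) :
    (∀ δ : ℝ, 0 < δ →
      IsUnit (H * P * Hᵀ + δ • (1 : Matrix (Fin m) (Fin m) ℝ))) ∧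
    Filter.Tendsto
      (fun δ : ℝ => P * Hᵀ * (H * P * Hᵀ + δ • (1 : Matrix (Fin m) (Fin m) ℝ))⁻¹)
      (nhdsWithin 0 (Set.Ioi 0)) (nhds (L * B)) := by
  subst hP
  have hHPH : H * (L * Lᵀ) * Hᵀ = H * L * (H * L)ᵀ := by
    rw [transpose_mul]
    simp only [Matrix.mul_assoc]
  have hgain : ∀ δ : ℝ, L * Lᵀ * Hᵀ * (H * (L * Lᵀ) * Hᵀ + δ • 1)⁻¹ =
      L * ((H * L)ᵀ * (H * L * (H * L)ᵀ + δ • 1)⁻¹) := by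
    intro δ
    rw [hHPH, transpose_mul]
    simp only [Matrix.mul_assoc]
  refine ⟨fun δ hδ => hHPH ▸ isUnit_mul_transpose_add_smul_one (H * L) hδ, ?_⟩
  simp only [hgain]
  exact ((continuous_const.matrix_mul continuous_id).tendsto _).comp
    (IsMoorePenroseInverse.tendsto_transpose_mul_inv_add_smul_one ⟨hB1, hB2, hB3, hB4⟩)

/-- **Theorem 1 (noise-free Kalman gain limit).**
Let `H` be a real `m × n` matrix and `L` a real `n × l` matrix with linearly independent
columns, and set `P = L * Lᵀ`.  Let `B` be the Moore–Penrose pseudoinverse of `H * L`.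
Then for every `δ > 0` the matrix `H * P * Hᵀ + δ • 1` is invertible, and
`P * Hᵀ * (H * P * Hᵀ + δ • 1)⁻¹` tends to `L * B` as `δ → 0⁺`. -/
theorem kalman_gain_noise_free_limit
    {m n l : ℕ}
    (H : Matrix (Fin m) (Fin n) ℝ) (L : Matrix (Fin n) (Fin l) ℝ)
    (hL : LinearIndependent ℝ Lᵀ)
    (P : Matrix (Fin n) (Fin n) ℝ) (hP : P = L * Lᵀ)
    (B : Matrix (Fin l) (Fin m) ℝ)
    (hB1 : (H * L) * B * (H * L) = H * L)
    (hB2 : B * (H * L) * B = B)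
    (hB3 : ((H * L) * B)ᵀ = (H * L) * B)
    (hB4 : (B * (H * L))ᵀ = B * (H * L)) :
    (∀ δ : ℝ, 0 < δ →
      IsUnit (H * P * Hᵀ + δ • (1 : Matrix (Fin m) (Fin m) ℝ))) ∧
    Filter.Tendsto
      (fun δ : ℝ => P * Hᵀ * (H * P * Hᵀ + δ • (1 : Matrix (Fin m) (Fin m) ℝ))⁻¹)
      (nhdsWithin 0 (Set.Ioi 0)) (nhds (L * B)) :=
  kalman_gain_noise_free_limit_general H L P hP B hB1 hB2 hB3 hB4
end

section
/- Let H be a real m×n matrix and L a real n×l matrix with linearly independent columns, set P = L Lᵀ, and let B be the Moore–Penrose pseudoinverse of H L. If H P Hᵀ is invertible, then the limit gain coincides with the standard noise-free Kalman gain: L B = P Hᵀ (H P Hᵀ)⁻¹. -/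
/-!
If `A * Aᵀ` is invertible, `A` has the right inverse `Aᵀ * (A * Aᵀ)⁻¹`. Multiplying `A * B * A = A`
on the right by it gives `A * B = 1`, and then symmetry of `B * A` forces `B = Aᵀ * (A * Aᵀ)⁻¹`.
With `A = H * L` we have `A * Aᵀ = H * P * Hᵀ`, so `L * B = L * Lᵀ * Hᵀ * (H * P * Hᵀ)⁻¹`.
-/

open Matrix

namespace Matrix

variable {m n R : Type*} [Fintype m] [Fintype n] [DecidableEq m] [CommRing R]

theorem mul_eq_one_of_mul_mul_self_eq_self {A : Matrix m n R} {B C : Matrix n m R}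
    (hAC : A * C = 1) (hB : A * B * A = A) : A * B = 1 :=
  calc A * B = A * B * (A * C) := by rw [hAC, Matrix.mul_one]
    _ = A * C := by rw [← Matrix.mul_assoc, hB]
    _ = 1 := hAC

theorem mul_transpose_mul_inv_of_isUnit {A : Matrix m n R} (hA : IsUnit (A * Aᵀ)) :
    A * (Aᵀ * (A * Aᵀ)⁻¹) = 1 := by
  rw [← Matrix.mul_assoc, mul_nonsing_inv _ ((isUnit_iff_isUnit_det _).mp hA)]

theorem eq_transpose_mul_inv_of_isUnit_mul_transpose {A : Matrix m n R} {B : Matrix n m R}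
    (hA : IsUnit (A * Aᵀ)) (hB1 : A * B * A = A) (hB4 : (B * A)ᵀ = B * A) :
    B = Aᵀ * (A * Aᵀ)⁻¹ := by
  have hAC := mul_transpose_mul_inv_of_isUnit hA
  have hAB : A * B = 1 := mul_eq_one_of_mul_mul_self_eq_self hAC hB1
  calc B = B * A * (Aᵀ * (A * Aᵀ)⁻¹) := by rw [Matrix.mul_assoc, hAC, Matrix.mul_one]
    _ = Aᵀ * (A * B)ᵀ * (A * Aᵀ)⁻¹ := by
      rw [← hB4, transpose_mul, transpose_mul]; simp only [Matrix.mul_assoc]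
    _ = Aᵀ * (A * Aᵀ)⁻¹ := by rw [hAB, transpose_one, Matrix.mul_one]

end Matrix

theorem limit_gain_eq_noise_free_kalman_gain_general
    {m n l : ℕ}
    (H : Matrix (Fin m) (Fin n) ℝ) (L : Matrix (Fin n) (Fin l) ℝ)
    (P : Matrix (Fin n) (Fin n) ℝ) (hP : P = L * Lᵀ)
    (B : Matrix (Fin l) (Fin m) ℝ)
    (hB1 : (H * L) * B * (H * L) = H * L)
    (hB4 : (B * (H * L))ᵀ = B * (H * L))
    (hS : IsUnit (H * P * Hᵀ)) :
    L * B = P * Hᵀ * (H * P * Hᵀ)⁻¹ := by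
  have hHPH : H * P * Hᵀ = H * L * (H * L)ᵀ := by
    rw [hP, transpose_mul]; simp only [Matrix.mul_assoc]
  rw [hHPH] at hS ⊢
  rw [eq_transpose_mul_inv_of_isUnit_mul_transpose hS hB1 hB4, hP, transpose_mul]
  simp only [Matrix.mul_assoc]

/-- If `H * P * Hᵀ` is invertible (with `P = L * Lᵀ`, `L` having linearly independent
columns, and `B` the Moore–Penrose pseudoinverse of `H * L`), then the limit gain `L * B`
coincides with the standard noise-free Kalman gain `P * Hᵀ * (H * P * Hᵀ)⁻¹`. -/
theorem limit_gain_eq_noise_free_kalman_gain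
    {m n l : ℕ}
    (H : Matrix (Fin m) (Fin n) ℝ) (L : Matrix (Fin n) (Fin l) ℝ)
    (hL : LinearIndependent ℝ Lᵀ)
    (P : Matrix (Fin n) (Fin n) ℝ) (hP : P = L * Lᵀ)
    (B : Matrix (Fin l) (Fin m) ℝ)
    (hB1 : (H * L) * B * (H * L) = H * L)
    (hB2 : B * (H * L) * B = B)
    (hB3 : ((H * L) * B)ᵀ = (H * L) * B)
    (hB4 : (B * (H * L))ᵀ = B * (H * L))
    (hS : IsUnit (H * P * Hᵀ)) :
    L * B = P * Hᵀ * (H * P * Hᵀ)⁻¹ :=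
  limit_gain_eq_noise_free_kalman_gain_general H L P hP B hB1 hB4 hS
end

section
/- Fix r ∈ ℝ³, α, β ∈ ℝ, and set d = (r, α, β) ∈ ℝ⁵ and H = [−(r)ₓ, α·I₃, β·I₃] ∈ ℝ^{3×9}. Let χ ∈ ℝ^{5×5} be the block matrix [R v p; 0 1 0; 0 0 1] with R ∈ SO(3) and v, p ∈ ℝ³, and let y ∈ ℝ⁵ satisfy χ d = y. Let ζ = (φ, ν, ρ) ∈ ℝ⁹ and let ζ^ ∈ ℝ^{5×5} be the block matrix [(φ)ₓ ν ρ; 0 0 0; 0 0 0]. If H ζ = 0, then χ · exp(ζ^) satisfies (χ · exp(ζ^)) d = y, where exp denotes the matrix exponential. -/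
open Matrix

noncomputable section

/-- The 3×3 skew-symmetric matrix `(b)ₓ` with `(b)ₓ u = b × u`. -/
def skew (b : Fin 3 → ℝ) : Matrix (Fin 3) (Fin 3) ℝ :=
  !![0, -b 2, b 1; b 2, 0, -b 0; -b 1, b 0, 0]

/-- The vector `d = (r, α, β) ∈ ℝ⁵`. -/
def dVec (r : Fin 3 → ℝ) (α β : ℝ) : Fin 5 → ℝ := fun i =>
  if h : (i : ℕ) < 3 then r ⟨i, h⟩ else if (i : ℕ) = 3 then α else β

/-- The 5×5 extended-pose block matrix `[R v p; 0 1 0; 0 0 1]`. -/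
def se23 (R : Matrix (Fin 3) (Fin 3) ℝ) (v p : Fin 3 → ℝ) : Matrix (Fin 5) (Fin 5) ℝ :=
  Matrix.of fun i j =>
    if hi : (i : ℕ) < 3 then
      if hj : (j : ℕ) < 3 then R ⟨i, hi⟩ ⟨j, hj⟩
      else if (j : ℕ) = 3 then v ⟨i, hi⟩ else p ⟨i, hi⟩
    else if (i : ℕ) = (j : ℕ) then 1 else 0

/-- The 5×5 Lie-algebra block matrix `ζ^ = [(φ)ₓ ν ρ; 0 0 0; 0 0 0]`. -/
def se23hat (φ ν ρ : Fin 3 → ℝ) : Matrix (Fin 5) (Fin 5) ℝ :=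
  Matrix.of fun i j =>
    if hi : (i : ℕ) < 3 then
      if hj : (j : ℕ) < 3 then skew φ ⟨i, hi⟩ ⟨j, hj⟩
      else if (j : ℕ) = 3 then ν ⟨i, hi⟩ else ρ ⟨i, hi⟩
    else 0

/-- The measurement Jacobian `H = [−(r)ₓ, α·I₃, β·I₃] ∈ ℝ^{3×9}`. -/
def Hmat (r : Fin 3 → ℝ) (α β : ℝ) : Matrix (Fin 3) (Fin 9) ℝ :=
  Matrix.of fun i j =>
    if hj : (j : ℕ) < 3 then (-(skew r)) i ⟨j, hj⟩
    else if _ : (j : ℕ) < 6 then (if (i : ℕ) = (j : ℕ) - 3 then α else 0)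
    else (if (i : ℕ) = (j : ℕ) - 6 then β else 0)

/-- The vector `ζ = (φ, ν, ρ) ∈ ℝ⁹`. -/
def vec9 (φ ν ρ : Fin 3 → ℝ) : Fin 9 → ℝ := fun j =>
  if hj : (j : ℕ) < 3 then φ ⟨j, hj⟩
  else if hj6 : (j : ℕ) < 6 then ν ⟨(j : ℕ) - 3, by omega⟩
  else ρ ⟨(j : ℕ) - 6, by omega⟩

end

/-!
A direct computation gives `ζ^ d = (H ζ, 0, 0)`, so `H ζ = 0` means that `ζ^` annihilates `d`.
Then every term of the exponential series except the identity annihilates `d`, hence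
`exp(ζ^) d = d` and `(χ exp(ζ^)) d = χ d = y`.
-/

open NormedSpace in
theorem NormedSpace.exp_mul_eq_self_of_mul_eq_zero {𝔸 : Type*} [NormedRing 𝔸] [NormedAlgebra ℚ 𝔸]
    [CompleteSpace 𝔸] {a b : 𝔸} (h : a * b = 0) : exp a * b = b := by
  refine ((exp_series_hasSum_exp' (𝕂 := ℚ) a).mul_right b).unique ?_
  convert hasSum_single 0 fun n hn => ?_ using 1
  · simp
  · obtain ⟨k, rfl⟩ := Nat.exists_eq_succ_of_ne_zero hn
    rw [smul_mul_assoc, pow_succ, mul_assoc, h, mul_zero, smul_zero]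

theorem Matrix.exp_mulVec_eq_self_of_mulVec_eq_zero {m 𝔸 : Type*} [Fintype m] [DecidableEq m]
    [NormedRing 𝔸] [NormedAlgebra ℚ 𝔸] [CompleteSpace 𝔸] {A : Matrix m m 𝔸} {v : m → 𝔸}
    (h : A *ᵥ v = 0) : NormedSpace.exp A *ᵥ v = v := by
  have hcol : NormedSpace.exp A * replicateCol m v = replicateCol m v := by
    open scoped Norms.Operator in
    -- instance search does not see that the operator norm induces the entrywise uniformity,
    -- so completeness is passed explicitly
    exact @NormedSpace.exp_mul_eq_self_of_mul_eq_zero _ _ _ (Matrix.instCompleteSpace m m 𝔸) _ _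
      (by rw [← replicateCol_mulVec, h, replicateCol_zero])
  funext i
  simpa [← replicateCol_mulVec] using congrFun₂ hcol i i

theorem se23hat_mulVec_dVec (φ ν ρ r : Fin 3 → ℝ) (α β : ℝ) :
    se23hat φ ν ρ *ᵥ dVec r α β =
      fun i : Fin 5 => if h : (i : ℕ) < 3 then (Hmat r α β *ᵥ vec9 φ ν ρ) ⟨i, h⟩ else 0 := by
  funext i
  fin_cases i <;>
    simp [mulVec, dotProduct, Fin.sum_univ_succ, se23hat, dVec, Hmat, vec9, skew] <;> ring

theorem se23hat_mulVec_dVec_eq_zero {φ ν ρ r : Fin 3 → ℝ} {α β : ℝ}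
    (hH : Hmat r α β *ᵥ vec9 φ ν ρ = 0) : se23hat φ ν ρ *ᵥ dVec r α β = 0 := by
  rw [se23hat_mulVec_dVec, hH]
  funext i
  simp

theorem constraint_preserved_by_kernel_directions_general
    (r : Fin 3 → ℝ) (α β : ℝ)
    (R : Matrix (Fin 3) (Fin 3) ℝ)
    (v p : Fin 3 → ℝ) (y : Fin 5 → ℝ)
    (hy : (se23 R v p).mulVec (dVec r α β) = y)
    (φ ν ρ : Fin 3 → ℝ)
    (hH : (Hmat r α β).mulVec (vec9 φ ν ρ) = 0) :
    (se23 R v p * NormedSpace.exp (se23hat φ ν ρ)).mulVec (dVec r α β) = y := by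
  rw [← mulVec_mulVec,
    Matrix.exp_mulVec_eq_self_of_mulVec_eq_zero (se23hat_mulVec_dVec_eq_zero hH), hy]

/-- **Proposition 1.** If `χ ∈ SE₂(3)` satisfies the constraint `χ d = y` and the Lie-algebra
element `ζ = (φ, ν, ρ)` satisfies `H ζ = 0`, then `χ · exp(ζ^)` also satisfies the
constraint: `(χ · exp(ζ^)) d = y`. -/
theorem constraint_preserved_by_kernel_directions
    (r : Fin 3 → ℝ) (α β : ℝ)
    (R : Matrix (Fin 3) (Fin 3) ℝ) (hR : Rᵀ * R = 1) (hdet : R.det = 1)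
    (v p : Fin 3 → ℝ) (y : Fin 5 → ℝ)
    (hy : (se23 R v p).mulVec (dVec r α β) = y)
    (φ ν ρ : Fin 3 → ℝ)
    (hH : (Hmat r α β).mulVec (vec9 φ ν ρ) = 0) :
    (se23 R v p * NormedSpace.exp (se23hat φ ν ρ)).mulVec (dVec r α β) = y :=
  constraint_preserved_by_kernel_directions_general r α β R v p y hy φ ν ρ hH
end

section
/- Fix r ∈ ℝ³, α, β ∈ ℝ, set d = (r, α, β) ∈ ℝ⁵ and H = [−(r)ₓ, α·I₃, β·I₃] ∈ ℝ^{3×9}. Let χ̂ ∈ ℝ^{5×5} be the block matrix [R̂ v̂ p̂; 0 1 0; 0 0 1] with R̂ ∈ SO(3) and v̂, p̂ ∈ ℝ³, and let y ∈ ℝ⁵ satisfy χ̂ d = y. Let P be a real 9×9 matrix with H P = 0. Then for every ξ in the column space of P (i.e., ξ = P w for some w ∈ ℝ⁹), one has (χ̂ · exp(ξ^)) d = y, where ξ^ ∈ ℝ^{5×5} is the block matrix [(φ)ₓ ν ρ; 0 0 0; 0 0 0] for ξ = (φ, ν, ρ). -/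
open Matrix

/-- The 5×5 Lie-algebra matrix `ξ^` associated to `ξ = (φ, ν, ρ) ∈ ℝ⁹`. -/
noncomputable def hat9 (ξ : Fin 9 → ℝ) : Matrix (Fin 5) (Fin 5) ℝ :=
  se23hat (fun i => ξ ⟨(i : ℕ), by have := i.isLt; omega⟩)
    (fun i => ξ ⟨(i : ℕ) + 3, by have := i.isLt; omega⟩)
    (fun i => ξ ⟨(i : ℕ) + 6, by have := i.isLt; omega⟩)

/-! Since `H ξ = H P w = 0` and `ξ^ d = (H ξ, 0, 0)`, every power `(ξ^)ᵏ` with `k ≥ 1` kills `d`,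
so `exp (ξ^) d = d` and `χ̂ exp (ξ^) d = χ̂ d = y`. -/

open scoped Norms.Operator in
theorem Matrix.exp_mulVec_of_mulVec_eq_zero {𝕂 n : Type*} [RCLike 𝕂] [Fintype n] [DecidableEq n]
    {A : Matrix n n 𝕂} {v : n → 𝕂} (h : A *ᵥ v = 0) : NormedSpace.exp A *ᵥ v = v := by
  have hpow (k : ℕ) : A ^ (k + 1) *ᵥ v = 0 := by rw [pow_succ, ← mulVec_mulVec, h, mulVec_zero]
  have hsum := (NormedSpace.exp_series_hasSum_exp' (𝕂 := 𝕂) A).map (mulVec.addMonoidHomLeft v)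
    (continuous_id.matrix_mulVec continuous_const)
  refine hsum.tsum_eq.symm.trans ?_
  rw [tsum_eq_single 0]
  · simp [mulVec.addMonoidHomLeft]
  · rintro (_ | k) hk
    · contradiction
    · simp [mulVec.addMonoidHomLeft, smul_mulVec, hpow]

theorem hat9_mulVec_dVec (r : Fin 3 → ℝ) (α β : ℝ) (ξ : Fin 9 → ℝ) :
    hat9 ξ *ᵥ dVec r α β =
      fun i : Fin 5 => if h : (i : ℕ) < 3 then (Hmat r α β *ᵥ ξ) ⟨i, h⟩ else 0 := by
  funext i
  fin_cases i <;>
    simp [mulVec, dotProduct, Fin.sum_univ_succ, hat9, se23hat, skew, dVec, Hmat] <;> ring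

theorem belief_lies_in_constraint_set_general
    (r : Fin 3 → ℝ) (α β : ℝ)
    (Rh : Matrix (Fin 3) (Fin 3) ℝ)
    (vh ph : Fin 3 → ℝ) (y : Fin 5 → ℝ)
    (hy : (se23 Rh vh ph).mulVec (dVec r α β) = y)
    (P : Matrix (Fin 9) (Fin 9) ℝ) (hHP : Hmat r α β * P = 0)
    (ξ : Fin 9 → ℝ) (w : Fin 9 → ℝ) (hξ : ξ = P.mulVec w) :
    (se23 Rh vh ph * NormedSpace.exp (hat9 ξ)).mulVec (dVec r α β) = y := by
  have hHξ : Hmat r α β *ᵥ ξ = 0 := by rw [hξ, mulVec_mulVec, hHP, zero_mulVec]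
  have hd : hat9 ξ *ᵥ dVec r α β = 0 := by
    rw [hat9_mulVec_dVec, hHξ]
    ext i
    simp
  rw [← mulVec_mulVec, Matrix.exp_mulVec_of_mulVec_eq_zero hd, hy]

/-- **Theorem 3.** If the estimate `χ̂` satisfies the noise-free constraint `χ̂ d = y` and the
updated covariance `P` satisfies `H P = 0`, then the whole belief lies in the constraint
set: for every `ξ` in the column space of `P`, `(χ̂ · exp(ξ^)) d = y`. -/
theorem belief_lies_in_constraint_set
    (r : Fin 3 → ℝ) (α β : ℝ)
    (Rh : Matrix (Fin 3) (Fin 3) ℝ) (hR : Rhᵀ * Rh = 1) (hdet : Rh.det = 1)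
    (vh ph : Fin 3 → ℝ) (y : Fin 5 → ℝ)
    (hy : (se23 Rh vh ph).mulVec (dVec r α β) = y)
    (P : Matrix (Fin 9) (Fin 9) ℝ) (hHP : Hmat r α β * P = 0)
    (ξ : Fin 9 → ℝ) (w : Fin 9 → ℝ) (hξ : ξ = P.mulVec w) :
    (se23 Rh vh ph * NormedSpace.exp (hat9 ξ)).mulVec (dVec r α β) = y :=
  belief_lies_in_constraint_set_general r α β Rh vh ph y hy P hHP ξ w hξ
end

section
/- Fix ω, a, g ∈ ℝ³ and dt ∈ ℝ, and set Ω = exp(dt·(ω)ₓ) ∈ SO(3). Define the propagation map Φ on triples (R, v, p) with R ∈ SO(3) and v, p ∈ ℝ³ by Φ(R, v, p) = (R Ω, v + (R a + g)·dt, p + v·dt). Equip such triples with the SE₂(3) group product (R₁, v₁, p₁)·(R₂, v₂, p₂) = (R₁ R₂, R₁ v₂ + v₁, R₁ p₂ + p₁), whose identity is e = (I₃, 0, 0). Then Φ is group affine: for all χ₁, χ₂, Φ(χ₁ · χ₂) = Φ(χ₁) · Φ(e)⁻¹ · Φ(χ₂), where the inverse is taken in the group (the inverse of (R, v, p) is (Rᵀ,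 −Rᵀv, −Rᵀp)). -/
open Matrix

noncomputable section

/-- Elements of `SE₂(3)` as triples `(R, v, p)`. -/
abbrev SE23T := Matrix (Fin 3) (Fin 3) ℝ × (Fin 3 → ℝ) × (Fin 3 → ℝ)

/-- The `SE₂(3)` group product
`(R₁, v₁, p₁) · (R₂, v₂, p₂) = (R₁ R₂, R₁ v₂ + v₁, R₁ p₂ + p₁)`. -/
def se23mul (x y : SE23T) : SE23T :=
  (x.1 * y.1, x.1.mulVec y.2.1 + x.2.1, x.1.mulVec y.2.2 + x.2.2)

/-- The `SE₂(3)` group inverse `(R, v, p)⁻¹ = (Rᵀ, −Rᵀ v, −Rᵀ p)`. -/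
def se23inv (x : SE23T) : SE23T :=
  (x.1ᵀ, -(x.1ᵀ.mulVec x.2.1), -(x.1ᵀ.mulVec x.2.2))

/-- The noise-free discrete-time IMU propagation map
`Φ(R, v, p) = (R Ω, v + (R a + g) dt, p + v dt)` with `Ω = exp(dt (ω)ₓ)`. -/
def Phi (ω a g : Fin 3 → ℝ) (dt : ℝ) (x : SE23T) : SE23T :=
  (x.1 * NormedSpace.exp (dt • skew ω),
    x.2.1 + dt • (x.1.mulVec a + g),
    x.2.2 + dt • x.2.1)

end

/-!
Writing `Ω = exp(dt (ω)ₓ)`, the propagation map factors as `Φ(χ) = Γ · ψ(χ) · Υ` with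
`Γ = (I, g dt, 0)`, `Υ = (Ω, a dt, 0)` and `ψ(R, v, p) = (R, v, p + v dt)`, an endomorphism of
`SE₂(3)`. Any map of this form is group affine:
`Φ(χ₁) Φ(e)⁻¹ Φ(χ₂) = Γ ψ(χ₁) Υ Υ⁻¹ Γ⁻¹ Γ ψ(χ₂) Υ = Γ ψ(χ₁ χ₂) Υ`.
The only analytic input is that `Υ` is invertible, i.e. `Ω Ωᵀ = I`, which holds because
`(ω)ₓ` is skew-symmetric.
-/

theorem Matrix.exp_mul_exp_transpose_of_transpose_eq_neg {m 𝔸 : Type*} [Fintype m]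
    [DecidableEq m] [NormedCommRing 𝔸] [NormedAlgebra ℚ 𝔸] [CompleteSpace 𝔸]
    {A : Matrix m m 𝔸} (hA : Aᵀ = -A) :
    NormedSpace.exp A * (NormedSpace.exp A)ᵀ = 1 := by
  rw [← exp_transpose, hA, ← exp_add_of_commute _ _ (Commute.refl A).neg_right, add_neg_cancel,
    NormedSpace.exp_zero]

theorem skew_transpose (b : Fin 3 → ℝ) : (skew b)ᵀ = -skew b := by
  ext i j
  fin_cases i <;> fin_cases j <;> simp [skew]

local infixl:70 " ⬝ " => se23mul

theorem se23mul_assoc (x y z : SE23T) : x ⬝ y ⬝ z = x ⬝ (y ⬝ z) := by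
  simp only [se23mul, Matrix.mul_assoc, mulVec_add, mulVec_mulVec, add_assoc]

theorem se23mul_one (x : SE23T) : x ⬝ (1, 0, 0) = x := by
  simp [se23mul]

theorem se23mul_se23inv_se23mul {x y : SE23T} (hx : x.1ᵀ * x.1 = 1) (hy : y.1 * y.1ᵀ = 1) :
    y ⬝ se23inv (x ⬝ y) = se23inv x := by
  simp only [se23mul, se23inv, transpose_mul, ← Matrix.mul_assoc, hy, Matrix.one_mul, mulVec_neg,
    mulVec_add, mulVec_mulVec, hx, one_mulVec, neg_add_rev]
  ext <;> simp

theorem se23inv_se23mul_self {x : SE23T} (hx : x.1ᵀ * x.1 = 1) : se23inv x ⬝ x = (1, 0, 0) := by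
  simp [se23mul, se23inv, hx]

def se23shear (dt : ℝ) (x : SE23T) : SE23T :=
  (x.1, x.2.1, x.2.2 + dt • x.2.1)

theorem se23shear_se23mul (dt : ℝ) (x y : SE23T) :
    se23shear dt (x ⬝ y) = se23shear dt x ⬝ se23shear dt y := by
  simp only [se23shear, se23mul, Prod.mk.injEq, mulVec_add, mulVec_smul, true_and]
  module

theorem se23shear_one (dt : ℝ) : se23shear dt (1, 0, 0) = (1, 0, 0) := by
  simp [se23shear]

theorem Phi_eq_se23mul (ω a g : Fin 3 → ℝ) (dt : ℝ) (x : SE23T) :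
    Phi ω a g dt x =
      (1, dt • g, 0) ⬝ se23shear dt x ⬝ (NormedSpace.exp (dt • skew ω), dt • a, 0) := by
  simp only [Phi, se23mul, se23shear, Matrix.one_mul, one_mulVec, mulVec_zero, zero_add,
    add_zero, Prod.mk.injEq, mulVec_smul, smul_add, true_and, and_true]
  module

theorem imu_dynamics_group_affine_general
    (ω a g : Fin 3 → ℝ) (dt : ℝ)
    (χ₁ χ₂ : SE23T) :
    Phi ω a g dt (se23mul χ₁ χ₂) =
      se23mul
        (se23mul (Phi ω a g dt χ₁)
          (se23inv (Phi ω a g dt ((1 : Matrix (Fin 3) (Fin 3) ℝ), 0, 0))))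
        (Phi ω a g dt χ₂) := by
  simp only [Phi_eq_se23mul, se23shear_se23mul, se23shear_one, se23mul_one]
  set Γ : SE23T := (1, dt • g, 0)
  set Υ : SE23T := (NormedSpace.exp (dt • skew ω), dt • a, 0)
  have hΥ : Υ.1 * Υ.1ᵀ = 1 := exp_mul_exp_transpose_of_transpose_eq_neg <| by
    rw [transpose_smul, skew_transpose, smul_neg]
  have hcancel : Υ ⬝ se23inv (Γ ⬝ Υ) ⬝ Γ = (1, 0, 0) := by
    rw [se23mul_se23inv_se23mul (by simp [Γ]) hΥ, se23inv_se23mul_self (by simp [Γ])]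
  calc Γ ⬝ (se23shear dt χ₁ ⬝ se23shear dt χ₂) ⬝ Υ
      = Γ ⬝ (se23shear dt χ₁ ⬝ (Υ ⬝ se23inv (Γ ⬝ Υ) ⬝ Γ) ⬝ se23shear dt χ₂) ⬝ Υ := by
        rw [hcancel, se23mul_one]
    _ = _ := by simp only [se23mul_assoc]

/-- **Group-affinity of the IMU dynamics.** For all extended poses `χ₁, χ₂ ∈ SE₂(3)`,
`Φ(χ₁ · χ₂) = Φ(χ₁) · Φ(e)⁻¹ · Φ(χ₂)`, where `e = (I₃, 0, 0)` is the group identity. -/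
theorem imu_dynamics_group_affine
    (ω a g : Fin 3 → ℝ) (dt : ℝ)
    (χ₁ χ₂ : SE23T)
    (h₁R : χ₁.1ᵀ * χ₁.1 = 1) (h₁det : χ₁.1.det = 1)
    (h₂R : χ₂.1ᵀ * χ₂.1 = 1) (h₂det : χ₂.1.det = 1) :
    Phi ω a g dt (se23mul χ₁ χ₂) =
      se23mul
        (se23mul (Phi ω a g dt χ₁)
          (se23inv (Phi ω a g dt ((1 : Matrix (Fin 3) (Fin 3) ℝ), 0, 0))))
        (Phi ω a g dt χ₂) :=
  imu_dynamics_group_affine_general ω a g dt χ₁ χ₂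
end
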